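/- arXiv:2306.07844 — 2 statements merged into one kernel-verified Lean document; each statement's English description precedes it below -/
import Mathlib

section
/- Let P ⊆ ℕ be ω-closed with 0 ∈ P and with at least two elements, and let ε be an injective endomorphism of the semigroup B_ω^𝓕 (𝓕 = {[p) : p ∈ P}). If ε(0,0,k) = (0,0,k) for some natural number k ≥ 2 with k ∈ P, then ε is the identity map. (Lemma 2.2) -/
/-- A set `P ⊆ ℕ` of left endpoints encodes an ω-closed family
`𝓕 = {[p) : p ∈ P}` of nonempty inductive subsets of ω iff
`max p₁ (p₂ ∸ n) ∈ P` for all `p₁, p₂ ∈ P` and `n ∈ ℕ`. -/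
def OmegaClosed (P : Set ℕ) : Prop :=
  ∀ p₁ ∈ P, ∀ p₂ ∈ P, ∀ n : ℕ, max p₁ (p₂ - n) ∈ P

/-- The multiplication of the semigroup `B_ω^𝓕` on triples `(i, j, p)`:
`(i₁,j₁,p₁)·(i₂,j₂,p₂) = (i₁ + (i₂ ∸ j₁), j₂ + (j₁ ∸ i₂), max (p₁ ∸ (i₂ ∸ j₁)) (p₂ ∸ (j₁ ∸ i₂)))`
(the third coordinate records `(j₁ - i₂ + [p₁)) ∩ [p₂)` etc.). -/
def bmul (x y : ℕ × ℕ × ℕ) : ℕ × ℕ × ℕ :=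
  (x.1 + (y.1 - x.2.1), y.2.1 + (x.2.1 - y.1),
    max (x.2.2 - (y.1 - x.2.1)) (y.2.2 - (x.2.1 - y.1)))

/-- The carrier of `B_ω^𝓕`: triples whose third coordinate lies in `P`. -/
def BF (P : Set ℕ) : Set (ℕ × ℕ × ℕ) := {x | x.2.2 ∈ P}

/-- `ε` is an endomorphism of the semigroup `B_ω^𝓕`. -/
def IsEndo (P : Set ℕ) (ε : ℕ × ℕ × ℕ → ℕ × ℕ × ℕ) : Prop :=
  (∀ x ∈ BF P, ε x ∈ BF P) ∧
    ∀ x ∈ BF P, ∀ y ∈ BF P, ε (bmul x y) = bmul (ε x) (ε y)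

/-!
The idempotents `(0,0,p)` form a chain, `(0,0,p) · (0,0,q) = (0,0,max p q)`, so `ε` maps
`(0,0,0), …, (0,0,k)` strictly monotonically into itself and hence fixes them. Since
`(0,1,0) · (1,0,0) = (0,0,0)`, the bicyclic generators go to `(0,m,0)` and `(m,0,0)`; the fixed
`(0,0,1)` and `(0,0,2)` together with injectivity force `m = 1`. Every `(0,0,p)` is then fixed by
induction on `p`, and so is every `(i,j,p) = (1,0,0)^i · (0,0,p) · (0,1,0)^j`.
-/

open Set

theorem StrictMonoOn.eq_self_of_mapsTo_Iic {α : Type*} [LinearOrder α] [LocallyFiniteOrderBot α]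
    {f : α → α} {k : α} (hf : StrictMonoOn f (Iic k)) (hmaps : MapsTo f (Iic k) (Iic k))
    {p : α} (hp : p ≤ k) : f p = p :=
  congrArg Subtype.val <|
    StrictMono.apply_eq (f := hmaps.restrict f _ _) (x := ⟨p, hp⟩) fun a b hab => hf a.2 b.2 hab

namespace OmegaClosed

variable {P : Set ℕ}

theorem sub_mem (hP : OmegaClosed P) (h0 : 0 ∈ P) {p : ℕ} (hp : p ∈ P) (n : ℕ) : p - n ∈ P := by
  simpa using hP 0 h0 p hp n

theorem mem_of_le (hP : OmegaClosed P) (h0 : 0 ∈ P) {p q : ℕ} (hp : p ∈ P) (hqp : q ≤ p) :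
    q ∈ P := by
  simpa [Nat.sub_sub_self hqp] using hP.sub_mem h0 hp (p - q)

end OmegaClosed

theorem mk_mem_BF {P : Set ℕ} {i j p : ℕ} : (i, j, p) ∈ BF P ↔ p ∈ P := Iff.rfl

theorem bmul_mk (i₁ j₁ p₁ i₂ j₂ p₂ : ℕ) :
    bmul (i₁, j₁, p₁) (i₂, j₂, p₂) =
      (i₁ + (i₂ - j₁), j₂ + (j₁ - i₂), max (p₁ - (i₂ - j₁)) (p₂ - (j₁ - i₂))) := rfl

theorem bmul_zero_zero_eq_max (p q : ℕ) : bmul (0, 0, p) (0, 0, q) = (0, 0, max p q) := by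
  simp [bmul]

theorem bmul_one_zero_zero_left (i j p : ℕ) : bmul (1, 0, 0) (i, j, p) = (i + 1, j, p) := by
  simp [bmul, add_comm]

theorem bmul_zero_one_zero_right (j p : ℕ) : bmul (0, j, p) (0, 1, 0) = (0, j + 1, p) := by
  simp [bmul, add_comm]

theorem exists_eq_of_bmul_zero_zero_eq {x : ℕ × ℕ × ℕ} {k : ℕ}
    (h : bmul x (0, 0, k) = (0, 0, k)) : ∃ w ≤ k, x = (0, 0, w) := by
  obtain ⟨u, v, w⟩ := x
  simp only [bmul_mk, Prod.mk.injEq] at h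
  obtain ⟨rfl, rfl⟩ : u = 0 ∧ v = 0 := by omega
  exact ⟨w, by omega, rfl⟩

theorem exists_eq_of_bmul_eq_zero {x y : ℕ × ℕ × ℕ} (h : bmul x y = (0, 0, 0)) :
    ∃ m, x = (0, m, 0) ∧ y = (m, 0, 0) := by
  obtain ⟨a₁, a₂, a₃⟩ := x
  obtain ⟨b₁, b₂, b₃⟩ := y
  simp only [bmul_mk, Prod.mk.injEq] at h
  obtain ⟨rfl, rfl, rfl, rfl, rfl⟩ : a₁ = 0 ∧ a₃ = 0 ∧ b₁ = a₂ ∧ b₂ = 0 ∧ b₃ = 0 := by omega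
  exact ⟨b₁, rfl, rfl⟩

theorem fst_eq_of_bmul_self {x : ℕ × ℕ × ℕ} (h : bmul x x = x) : x.1 = x.2.1 := by
  obtain ⟨u, v, w⟩ := x
  simp only [bmul_mk, Prod.mk.injEq] at h
  dsimp only
  omega

theorem eq_of_bmul_zero_one_zero_eq {u w p : ℕ} (hp : 1 ≤ p)
    (h : bmul (0, 1, 0) (u, u, w) = (0, 1, p)) : (u = 0 ∧ w = p + 1) ∨ (u = 1 ∧ w = p) := by
  simp only [bmul_mk, Prod.mk.injEq] at h
  omega

namespace IsEndo

variable {P : Set ℕ} {ε : ℕ × ℕ × ℕ → ℕ × ℕ × ℕ}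

theorem map_bmul (hε : IsEndo P ε) {i₁ j₁ p₁ i₂ j₂ p₂ : ℕ} (hp₁ : p₁ ∈ P) (hp₂ : p₂ ∈ P) :
    ε (bmul (i₁, j₁, p₁) (i₂, j₂, p₂)) = bmul (ε (i₁, j₁, p₁)) (ε (i₂, j₂, p₂)) :=
  hε.2 _ hp₁ _ hp₂

theorem map_zero_zero_of_le (hε : IsEndo P ε) (hinj : InjOn ε (BF P)) (hP : OmegaClosed P)
    (h0 : 0 ∈ P) {k : ℕ} (hkP : k ∈ P) (hfix : ε (0, 0, k) = (0, 0, k)) {p : ℕ} (hpk : p ≤ k) :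
    ε (0, 0, p) = (0, 0, p) := by
  have hmem : ∀ q ≤ k, q ∈ P := fun q hq => hP.mem_of_le h0 hkP hq
  have hshape : ∀ q ≤ k, ∃ w ≤ k, ε (0, 0, q) = (0, 0, w) := fun q hq =>
    exists_eq_of_bmul_zero_zero_eq <| by
      rw [← hfix, ← hε.map_bmul (hmem q hq) hkP, bmul_zero_zero_eq_max, max_eq_right hq]
  set w : ℕ → ℕ := fun q => (ε (0, 0, q)).2.2 with hw
  have hεw : ∀ q ≤ k, ε (0, 0, q) = (0, 0, w q) := fun q hq => by
    obtain ⟨w', -, hw'⟩ := hshape q hq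
    simp [hw, hw']
  have hmono : StrictMonoOn w (Iic k) := by
    intro q hq r hr hqr
    have hle : w q ≤ w r := by
      have h := hε.map_bmul (i₁ := 0) (j₁ := 0) (i₂ := 0) (j₂ := 0) (hmem q hq) (hmem r hr)
      rw [bmul_zero_zero_eq_max, max_eq_right hqr.le, hεw q hq, hεw r hr,
        bmul_zero_zero_eq_max] at h
      simpa using (congrArg (·.2.2) h).symm
    refine hle.lt_of_ne fun heq => hqr.ne ?_
    have := hinj (mk_mem_BF.2 (hmem q hq)) (mk_mem_BF.2 (hmem r hr))
      (by rw [hεw q hq, hεw r hr, heq])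
    simpa using this
  have hmaps : MapsTo w (Iic k) (Iic k) := fun q hq => by
    obtain ⟨w', hw'k, hw'⟩ := hshape q hq
    simpa [hw, hw'] using hw'k
  rw [hεw p hpk, hmono.eq_self_of_mapsTo_Iic hmaps hpk]

theorem map_mk_eq_self (hε : IsEndo P ε) (h0 : 0 ∈ P) (ha : ε (0, 1, 0) = (0, 1, 0))
    (hb : ε (1, 0, 0) = (1, 0, 0)) {p : ℕ} (hp : p ∈ P) (hfix : ε (0, 0, p) = (0, 0, p))
    (i j : ℕ) : ε (i, j, p) = (i, j, p) := by
  have hrow : ∀ j, ε (0, j, p) = (0, j, p) := by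
    intro j
    induction j with
    | zero => exact hfix
    | succ j ih => rw [← bmul_zero_one_zero_right, hε.map_bmul hp h0, ih, ha]
  induction i with
  | zero => exact hrow j
  | succ i ih => rw [← bmul_one_zero_zero_left, hε.map_bmul h0 hp, hb, ih]

theorem map_generators (hε : IsEndo P ε) (hinj : InjOn ε (BF P)) (hP : ∀ p ≤ 2, p ∈ P)
    (hfix : ∀ p ≤ 2, ε (0, 0, p) = (0, 0, p)) :
    ε (0, 1, 0) = (0, 1, 0) ∧ ε (1, 0, 0) = (1, 0, 0) := by
  have h0 := hP 0 (by norm_num)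
  obtain ⟨m, ha, hb⟩ : ∃ m, ε (0, 1, 0) = (0, m, 0) ∧ ε (1, 0, 0) = (m, 0, 0) :=
    exists_eq_of_bmul_eq_zero <| by
      rw [← hε.map_bmul h0 h0, show bmul (0, 1, 0) (1, 0, 0) = (0, 0, 0) from rfl,
        hfix 0 (by norm_num)]
  have hm_pos : 1 ≤ m := by
    have h := hε.map_bmul (i₁ := 0) (j₁ := 1) (i₂ := 0) (j₂ := 0) h0 (hP 1 (by norm_num))
    rw [show bmul (0, 1, 0) (0, 0, 1) = (0, 1, 0) from rfl, ha, hfix 1 (by norm_num),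
      bmul_mk] at h
    simp only [Prod.mk.injEq] at h
    omega
  have hdiag : ε (1, 1, 0) = (m, m, 0) := by
    rw [show ((1, 1, 0) : ℕ × ℕ × ℕ) = bmul (1, 0, 0) (0, 1, 0) from rfl, hε.map_bmul h0 h0,
      ha, hb, bmul_mk]
    simp
  -- for `m ≥ 2` the idempotent `(0,0,2)` is absorbed by `(m,m,0)`, so `ε (1,1,1) = ε (1,1,0)`
  have hm_le : m ≤ 1 := by
    by_contra! hm
    have h := hε.map_bmul (i₁ := 0) (j₁ := 0) (i₂ := 1) (j₂ := 1) (hP 2 le_rfl) h0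
    rw [show bmul (0, 0, 2) (1, 1, 0) = (1, 1, 1) from rfl, hfix 2 le_rfl, hdiag, bmul_mk] at h
    have hcollapse : ε (1, 1, 1) = ε (1, 1, 0) := by
      rw [h, hdiag]
      simp only [Prod.mk.injEq]
      omega
    simpa using hinj (mk_mem_BF.2 (hP 1 (by norm_num))) (mk_mem_BF.2 h0) hcollapse
  obtain rfl : m = 1 := by omega
  exact ⟨ha, hb⟩

/-- `ε (0,0,p+1)` is an idempotent `(u,u,w)` with `(0,1,0) · ε (0,0,p+1) = (0,1,p)`; this leaves
only `(0,0,p+1)` and `(1,1,p) = ε (1,1,p)`, which injectivity excludes. -/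
theorem map_zero_zero_succ (hε : IsEndo P ε) (hinj : InjOn ε (BF P)) (h0 : 0 ∈ P)
    (ha : ε (0, 1, 0) = (0, 1, 0)) (hb : ε (1, 0, 0) = (1, 0, 0)) {p : ℕ} (hp1 : 1 ≤ p)
    (hp : p ∈ P) (hsucc : p + 1 ∈ P) (hfix : ε (0, 0, p) = (0, 0, p)) :
    ε (0, 0, p + 1) = (0, 0, p + 1) := by
  rcases hx : ε (0, 0, p + 1) with ⟨u, v, w⟩
  obtain rfl : u = v := by
    have h := fst_eq_of_bmul_self (x := ε (0, 0, p + 1)) <| by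
      rw [← hε.map_bmul hsucc hsucc, bmul_zero_zero_eq_max, max_self]
    rwa [hx] at h
  have hleft : bmul (0, 1, 0) (u, u, w) = (0, 1, p) := by
    have h := hε.map_bmul (i₁ := 0) (j₁ := 1) (i₂ := 0) (j₂ := 0) h0 hsucc
    rw [show bmul (0, 1, 0) (0, 0, p + 1) = (0, 1, p) by simp [bmul],
      hε.map_mk_eq_self h0 ha hb hp hfix, ha, hx] at h
    exact h.symm
  rcases eq_of_bmul_zero_one_zero_eq hp1 hleft with ⟨rfl, rfl⟩ | ⟨rfl, rfl⟩
  · rfl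
  · rw [← hε.map_mk_eq_self h0 ha hb hp hfix] at hx
    simpa using hinj (mk_mem_BF.2 hsucc) (mk_mem_BF.2 hp) hx

end IsEndo

theorem identity_of_fixes_zero_zero_k_general (P : Set ℕ) (hP : OmegaClosed P) (h0 : 0 ∈ P)
    (ε : ℕ × ℕ × ℕ → ℕ × ℕ × ℕ)
    (hend : IsEndo P ε) (hinj : Set.InjOn ε (BF P))
    (k : ℕ) (hk : 2 ≤ k) (hkP : k ∈ P) (hfix : ε (0, 0, k) = (0, 0, k)) :
    ∀ x ∈ BF P, ε x = x := by
  have hle : ∀ p ≤ k, ε (0, 0, p) = (0, 0, p) := fun p hp =>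
    hend.map_zero_zero_of_le hinj hP h0 hkP hfix hp
  obtain ⟨ha, hb⟩ := hend.map_generators hinj (fun p hp => hP.mem_of_le h0 hkP (hp.trans hk))
    (fun p hp => hle p (hp.trans hk))
  have hdiag : ∀ p ∈ P, ε (0, 0, p) = (0, 0, p) := by
    intro p hp
    induction p with
    | zero => exact hle 0 k.zero_le
    | succ p ih =>
      have hpP := hP.mem_of_le h0 hp p.le_succ
      rcases Nat.eq_zero_or_pos p with rfl | hpos
      · exact hle 1 (by omega)
      · exact hend.map_zero_zero_succ hinj h0 ha hb hpos hpP hp (ih hpP)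
  rintro ⟨i, j, p⟩ hp
  exact hend.map_mk_eq_self h0 ha hb hp (hdiag p hp) i j

/-- **Lemma 2.2.** If an injective endomorphism `ε` of `B_ω^𝓕` (`P` ω-closed, `0 ∈ P`,
`P` with at least two elements) satisfies `ε (0,0,k) = (0,0,k)` for some `k ≥ 2` with
`k ∈ P`, then `ε` is the identity. -/
theorem identity_of_fixes_zero_zero_k (P : Set ℕ) (hP : OmegaClosed P) (h0 : 0 ∈ P)
    (hP2 : P.Nontrivial) (ε : ℕ × ℕ × ℕ → ℕ × ℕ × ℕ)
    (hend : IsEndo P ε) (hinj : Set.InjOn ε (BF P))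
    (k : ℕ) (hk : 2 ≤ k) (hkP : k ∈ P) (hfix : ε (0, 0, k) = (0, 0, k)) :
    ∀ x ∈ BF P, ε x = x :=
  identity_of_fixes_zero_zero_k_general P hP h0 ε hend hinj k hk hkP hfix
end

section
/- Let P ⊆ ℕ be ω-closed with 0 ∈ P and with at least two elements, and let ε be an injective endomorphism of the semigroup B_ω^𝓕 (𝓕 = {[p) : p ∈ P}). If there exists an idempotent (i,i,p) ∈ B_ω^𝓕 with (i,i,p) ∉ {(0,0,0), (0,0,1)} such that ε(i,i,p) = (i,i,p), then ε is the identity map. (Lemma 2.3) -/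
/-!
The elements `a = (0,1,0)` and `b = (1,0,0)` generate a bicyclic monoid with identity
`(0,0,0)`, and every element factors as `(i,j,q) = bᶦ·(0,0,q)·aʲ`. The bicyclic relations
force `ε a = (k,k+d,r)`, `ε b = (k+d,k,r)` with `d > 0`, so `ε (i,j,q) = (g+id, g+jd, h)`
where `ε (0,0,q) = (g,g,h)`. Comparing with the fixed idempotent gives `k = 0`, and the
conjugation `aⁿ·(0,0,q)·bⁿ = (0,0,q-n)` together with injectivity on `(0,0,1) ≠ (0,0,0)`
gives `d = 1` and `r = 0`, so `ε` fixes `a` and `b`. The same conjugation identity and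
injectivity then force `ε (0,0,q) = (0,0,q)` for every `q ∈ P`.
-/

theorem OmegaClosed.sub_mem_s4 {P : Set ℕ} (hP : OmegaClosed P) (h0 : 0 ∈ P) {q : ℕ}
    (hq : q ∈ P) (n : ℕ) : q - n ∈ P := by
  simpa using hP 0 h0 q hq n

theorem bmul_self_eq_self_iff {x : ℕ × ℕ × ℕ} : bmul x x = x ↔ x.1 = x.2.1 := by
  obtain ⟨i, j, p⟩ := x
  simp only [bmul, Prod.mk.injEq]
  omega

theorem bmul_factor (i j q : ℕ) : bmul (bmul (i, 0, 0) (0, 0, q)) (0, j, 0) = (i, j, q) := by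
  simp [bmul]

theorem bmul_conj (m r h : ℕ) :
    bmul (bmul (0, m, r) (0, 0, h)) (m, 0, r) = (0, 0, max r (h - m)) := by
  simp only [bmul, Prod.mk.injEq]
  omega

namespace IsEndo

variable {P : Set ℕ} {ε : ℕ × ℕ × ℕ → ℕ × ℕ × ℕ}

theorem apply_fst_eq_snd (hε : IsEndo P ε) {x : ℕ × ℕ × ℕ} (hx : x ∈ BF P)
    (hxx : bmul x x = x) : (ε x).1 = (ε x).2.1 := by
  rw [← bmul_self_eq_self_iff, ← hε.2 x hx x hx, hxx]

theorem apply_eq_bmul (hε : IsEndo P ε) (h0 : 0 ∈ P) {q : ℕ} (hq : q ∈ P) (i j : ℕ) :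
    ε (i, j, q) = bmul (bmul (ε (i, 0, 0)) (ε (0, 0, q))) (ε (0, j, 0)) := by
  rw [← hε.2 _ h0 _ hq, ← hε.2 _ (by simpa [bmul, BF] using hq) _ h0, bmul_factor]

theorem apply_sub_eq_bmul (hε : IsEndo P ε) (hP : OmegaClosed P) (h0 : 0 ∈ P) {q : ℕ}
    (hq : q ∈ P) (n : ℕ) :
    ε (0, 0, q - n) = bmul (bmul (ε (0, n, 0)) (ε (0, 0, q))) (ε (n, 0, 0)) := by
  have hq' : bmul (0, n, 0) (0, 0, q) ∈ BF P := by
    simpa [bmul, BF] using hP.sub_mem_s4 h0 hq n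
  rw [← hε.2 _ h0 _ hq, ← hε.2 _ hq' _ h0, bmul_conj, max_eq_right (Nat.zero_le _)]

theorem exists_apply_generators (hε : IsEndo P ε) (h0 : 0 ∈ P) (hinj : Set.InjOn ε (BF P)) :
    ∃ k d r, 0 < d ∧ ε (0, 0, 0) = (k, k, r) ∧ ε (0, 1, 0) = (k, k + d, r) ∧
      ε (1, 0, 0) = (k + d, k, r) := by
  have hmul (x y : ℕ × ℕ) : ε (bmul (x.1, x.2, 0) (y.1, y.2, 0)) =
      bmul (ε (x.1, x.2, 0)) (ε (y.1, y.2, 0)) := hε.2 _ h0 _ h0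
  have hea := hmul (0, 0) (0, 1)
  have hae := hmul (0, 1) (0, 0)
  have heb := hmul (0, 0) (1, 0)
  have hbe := hmul (1, 0) (0, 0)
  have hab := hmul (0, 1) (1, 0)
  -- `a = (0,1,0)` and `b = (1,0,0)` satisfy `e a = a e = a`, `e b = b e = b`, `a b = e`
  -- with `e = (0,0,0)`, and `a` is not idempotent, so neither is its image
  have haa : ε (0, 1, 0) ≠ bmul (ε (0, 1, 0)) (ε (0, 1, 0)) := fun h => by
    have := hinj h0 h0 (h.trans (hmul (0, 1) (0, 1)).symm)
    simp [bmul] at this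
  clear hmul
  simp only [bmul, Nat.sub_self, Nat.zero_sub, add_zero, zero_add, max_self, tsub_zero]
    at hea hae heb hbe hab haa
  generalize ε (0, 0, 0) = e at *
  generalize ε (0, 1, 0) = A at *
  generalize ε (1, 0, 0) = B at *
  obtain ⟨k, k', r⟩ := e
  obtain ⟨x, y, z⟩ := A
  obtain ⟨u, v, w⟩ := B
  simp only [Prod.mk.injEq, ne_eq] at *
  obtain ⟨hea1, hea2, hea3⟩ := hea
  obtain ⟨hae1, hae2, hae3⟩ := hae
  obtain ⟨heb1, heb2, heb3⟩ := heb
  obtain ⟨hbe1, hbe2, hbe3⟩ := hbe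
  obtain ⟨hab1, hab2, hab3⟩ := hab
  obtain ⟨hk', hx, hv, hu, hky⟩ : k = k' ∧ k = x ∧ k = v ∧ y = u ∧ k ≤ y := by
    clear * - hea1 hea2 hae1 hae2 heb1 heb2 hbe1 hbe2 hab1 hab2
    omega
  subst hk' hx hv hu
  obtain ⟨d, rfl⟩ := Nat.exists_eq_add_of_le hky
  exact ⟨k, d, r, by omega⟩

theorem apply_zero_n_zero (hε : IsEndo P ε) (h0 : 0 ∈ P) {k d r : ℕ}
    (hone : ε (0, 0, 0) = (k, k, r)) (ha : ε (0, 1, 0) = (k, k + d, r)) :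
    ∀ n : ℕ, ε (0, n, 0) = (k, k + n * d, r)
  | 0 => by simpa using hone
  | n + 1 => by
    have hn : ((0 : ℕ), n + 1, (0 : ℕ)) = bmul (0, n, 0) (0, 1, 0) := by
      simp only [bmul, Prod.mk.injEq]; omega
    rw [hn, hε.2 _ h0 _ h0, apply_zero_n_zero hε h0 hone ha n, ha]
    simp only [bmul, Prod.mk.injEq]
    refine ⟨by omega, by rw [Nat.succ_mul]; omega, by omega⟩

theorem apply_n_zero_zero (hε : IsEndo P ε) (h0 : 0 ∈ P) {k d r : ℕ}
    (hone : ε (0, 0, 0) = (k, k, r)) (hb : ε (1, 0, 0) = (k + d, k, r)) :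
    ∀ n : ℕ, ε (n, 0, 0) = (k + n * d, k, r)
  | 0 => by simpa using hone
  | n + 1 => by
    have hn : ((n + 1 : ℕ), (0 : ℕ), (0 : ℕ)) = bmul (1, 0, 0) (n, 0, 0) := by
      simp only [bmul, Prod.mk.injEq]; omega
    rw [hn, hε.2 _ h0 _ h0, apply_n_zero_zero hε h0 hone hb n, hb]
    simp only [bmul, Prod.mk.injEq]
    refine ⟨by rw [Nat.succ_mul]; omega, by omega, by omega⟩

theorem exists_apply_zero_zero (hε : IsEndo P ε) (h0 : 0 ∈ P) {k r q : ℕ}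
    (hone : ε (0, 0, 0) = (k, k, r)) (hq : q ∈ P) :
    ∃ g h, k ≤ g ∧ r - (g - k) ≤ h ∧ ε (0, 0, q) = (g, g, h) := by
  have hidem := hε.apply_fst_eq_snd hq (x := (0, 0, q)) (by simp [bmul])
  have hunit := hε.2 (0, 0, 0) h0 (0, 0, q) hq
  rw [show bmul (0, 0, 0) (0, 0, q) = (0, 0, q) by simp [bmul], hone] at hunit
  rcases hgh : ε (0, 0, q) with ⟨g, g', h⟩
  rw [hgh] at hidem hunit
  simp only [bmul, Prod.mk.injEq] at hidem hunit
  subst hidem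
  exact ⟨g, h, by omega, by omega, rfl⟩

theorem apply_eq_of_generators (hε : IsEndo P ε) (h0 : 0 ∈ P) {k d r q g h : ℕ}
    (hone : ε (0, 0, 0) = (k, k, r)) (ha : ε (0, 1, 0) = (k, k + d, r))
    (hb : ε (1, 0, 0) = (k + d, k, r)) (hq : q ∈ P) (hkg : k ≤ g) (hrh : r - (g - k) ≤ h)
    (hgh : ε (0, 0, q) = (g, g, h)) (i j : ℕ) :
    ε (i, j, q) = (g + i * d, g + j * d, h) := by
  rw [hε.apply_eq_bmul h0 hq, hε.apply_n_zero_zero h0 hone hb, hgh,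
    hε.apply_zero_n_zero h0 hone ha]
  generalize i * d = m
  generalize j * d = n
  simp only [bmul, Prod.mk.injEq]
  omega

theorem eq_id_of_fixes_generators (hε : IsEndo P ε) (hP : OmegaClosed P) (h0 : 0 ∈ P)
    (hinj : Set.InjOn ε (BF P)) (ha : ε (0, 1, 0) = (0, 1, 0)) (hb : ε (1, 0, 0) = (1, 0, 0)) :
    ∀ x ∈ BF P, ε x = x := by
  have hone : ε (0, 0, 0) = (0, 0, 0) := by
    simpa [bmul, ha, hb] using hε.2 (0, 1, 0) h0 (1, 0, 0) h0
  have hpow_a (n : ℕ) : ε (0, n, 0) = (0, n, 0) := by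
    simpa using hε.apply_zero_n_zero h0 hone (d := 1) ha n
  have hpow_b (n : ℕ) : ε (n, 0, 0) = (n, 0, 0) := by
    simpa using hε.apply_n_zero_zero h0 hone (d := 1) hb n
  have hlayer (q : ℕ) (hq : q ∈ P) : ε (0, 0, q) = (0, 0, q) := by
    obtain ⟨g, h, -, -, hgh⟩ := hε.exists_apply_zero_zero h0 hone hq
    have hsub (n : ℕ) : ε (0, 0, q - n) = bmul (bmul (0, n, 0) (g, g, h)) (n, 0, 0) := by
      rw [hε.apply_sub_eq_bmul hP h0 hq, hpow_a, hpow_b, hgh]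
    -- `(g,g,h)` is also the image of `(g,g,q-g)`
    have hg : g = 0 := by
      have hgg : ε (g, g, q - g) = ε (0, 0, q) := by
        rw [hε.apply_eq_bmul h0 (hP.sub_mem_s4 h0 hq g), hsub, hpow_a, hpow_b, hgh]
        simp only [bmul, Prod.mk.injEq]
        omega
      simpa using (Prod.ext_iff.mp (hinj (hP.sub_mem_s4 h0 hq g) hq hgg)).1
    subst hg
    have hsub' (n : ℕ) : ε (0, 0, q - n) = (0, 0, h - n) := by simpa [bmul] using hsub n
    have hhq : h ≤ q := by simpa [hone, eq_comm, Nat.sub_eq_zero_iff_le] using hsub' q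
    have hqh : q ≤ h := by
      have := hinj (hP.sub_mem_s4 h0 hq h) h0 ((hsub' h).trans (by simpa using hone.symm))
      simpa [Nat.sub_eq_zero_iff_le] using this
    rw [hgh, Nat.le_antisymm hhq hqh]
  rintro ⟨i, j, q⟩ hq
  rw [hε.apply_eq_bmul h0 hq, hpow_b, hlayer q hq, hpow_a, bmul_factor]

theorem eq_zero_and_eq_one_of_fixes (hε : IsEndo P ε) (hP : OmegaClosed P) (h0 : 0 ∈ P)
    (hinj : Set.InjOn ε (BF P)) {d r p : ℕ} (hd : 0 < d) (hone : ε (0, 0, 0) = (0, 0, r))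
    (ha : ε (0, 1, 0) = (0, d, r)) (hb : ε (1, 0, 0) = (d, 0, r)) (hp : p ∈ P)
    (hfix : ε (0, 0, p) = (0, 0, p)) :
    r = 0 ∧ (2 ≤ p → d = 1) := by
  rcases Nat.eq_zero_or_pos p with rfl | hp1
  · simpa using hone.symm.trans hfix
  have hsub (n : ℕ) : ε (0, 0, p - n) = (0, 0, max r (p - n * d)) := by
    rw [hε.apply_sub_eq_bmul hP h0 hp, hε.apply_zero_n_zero h0 hone (d := d) (by rwa [zero_add]),
      hε.apply_n_zero_zero h0 hone (d := d) (by rwa [zero_add]), hfix]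
    simpa using bmul_conj (n * d) r p
  have hlt : r < p - (p - 1) * d := by
    have h1 := hsub (p - 1)
    rw [Nat.sub_sub_self hp1] at h1
    have h1P : 1 ∈ P := by simpa [Nat.sub_sub_self hp1] using hP.sub_mem_s4 h0 hp (p - 1)
    have hne : ε (0, 0, 1) ≠ ε (0, 0, 0) := fun h => by simpa using hinj h1P h0 h
    rw [h1, hone] at hne
    simp only [ne_eq, Prod.mk.injEq, true_and] at hne
    generalize p - (p - 1) * d = m at hne ⊢
    omega
  have hle : p - 1 ≤ (p - 1) * d := Nat.le_mul_of_pos_right _ hd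
  refine ⟨by omega, fun hp2 => ?_⟩
  by_contra hd1
  have : 2 * (p - 1) ≤ (p - 1) * d := by rw [mul_comm]; exact Nat.mul_le_mul_left _ (by omega)
  omega

end IsEndo

theorem identity_of_fixes_idempotent_general (P : Set ℕ) (hP : OmegaClosed P) (h0 : 0 ∈ P)
    (ε : ℕ × ℕ × ℕ → ℕ × ℕ × ℕ)
    (hend : IsEndo P ε) (hinj : Set.InjOn ε (BF P))
    (i p : ℕ) (hp : p ∈ P)
    (hne0 : ((i, i, p) : ℕ × ℕ × ℕ) ≠ (0, 0, 0))
    (hne1 : ((i, i, p) : ℕ × ℕ × ℕ) ≠ (0, 0, 1))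
    (hfix : ε (i, i, p) = (i, i, p)) :
    ∀ x ∈ BF P, ε x = x := by
  obtain ⟨k, d, r, hd, hone, ha, hb⟩ := hend.exists_apply_generators h0 hinj
  obtain ⟨g, h, hkg, hrh, hgh⟩ := hend.exists_apply_zero_zero h0 hone hp
  have hii := hend.apply_eq_of_generators h0 hone ha hb hp hkg hrh hgh i i
  simp only [hfix, Prod.mk.injEq] at hii
  have hid : i ≤ i * d := Nat.le_mul_of_pos_right i hd
  obtain ⟨rfl, rfl, rfl⟩ : g = 0 ∧ h = p ∧ k = 0 := by omega
  have hi : i = 0 ∨ d = 1 := by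
    have : i * d = i := by omega
    exact (mul_right_eq_self₀.mp this).symm
  simp only [zero_add] at ha hb
  obtain ⟨rfl, hd1⟩ := hend.eq_zero_and_eq_one_of_fixes hP h0 hinj hd hone ha hb hp hgh
  obtain rfl : d = 1 := by
    rcases hi with rfl | rfl
    · simp only [ne_eq, Prod.mk.injEq, true_and] at hne0 hne1
      exact hd1 (by omega)
    · rfl
  exact hend.eq_id_of_fixes_generators hP h0 hinj ha hb

/-- **Lemma 2.3.** If an injective endomorphism `ε` of `B_ω^𝓕` (`P` ω-closed, `0 ∈ P`,
`P` with at least two elements) fixes some idempotent `(i,i,p) ∉ {(0,0,0), (0,0,1)}`,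
then `ε` is the identity. -/
theorem identity_of_fixes_idempotent (P : Set ℕ) (hP : OmegaClosed P) (h0 : 0 ∈ P)
    (hP2 : P.Nontrivial) (ε : ℕ × ℕ × ℕ → ℕ × ℕ × ℕ)
    (hend : IsEndo P ε) (hinj : Set.InjOn ε (BF P))
    (i p : ℕ) (hp : p ∈ P)
    (hne0 : ((i, i, p) : ℕ × ℕ × ℕ) ≠ (0, 0, 0))
    (hne1 : ((i, i, p) : ℕ × ℕ × ℕ) ≠ (0, 0, 1))
    (hfix : ε (i, i, p) = (i, i, p)) :
    ∀ x ∈ BF P, ε x = x :=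
  identity_of_fixes_idempotent_general P hP h0 ε hend hinj i p hp hne0 hne1 hfix
end
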